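/- Let s, t ∈ ℂ, and let Can(f_{s,t}) denote the canonizant of the binary quintic f_{s,t} := z1^5 + s·z1^4·z2 + t·z1^3·z2^2 + z2^5, namely the binary cubic given by the determinant of the 3×3 matrix with rows (z1 + (s/5)z2, (s/5)z1 + (t/10)z2, (t/10)z1), ((s/5)z1 + (t/10)z2, (t/10)z1, 0), ((t/10)z1, 0, z2). Then for any b_ν, c_ν ∈ ℂ (ν = 1, 2, 3) with Can(f_{s,t}) = ∏_{ν=1}^{3}(b_ν·z1 − c_ν·z2), one has ∏_{1 ≤ α < β ≤ 3} (b_α·c_β − b_β·c_α)^2 = −(19200s^6t^2 − 160000s^4t^3 − 1120s^3t^6 + 440000s^2t^4 + 3600st^7 + 27t^{10} − 400000t^5)/10^{10}. -/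
import Mathlib


open MvPolynomial Finset

/-- The canonizant of the binary quintic `f_{s,t} = z1^5 + s z1^4 z2 + t z1^3 z2^2 + z2^5`:
the determinant of the 3×3 matrix with rows
`(z1 + (s/5) z2, (s/5) z1 + (t/10) z2, (t/10) z1)`,
`((s/5) z1 + (t/10) z2, (t/10) z1, 0)`, `((t/10) z1, 0, z2)`. -/
noncomputable def canFst (s t : ℂ) : MvPolynomial (Fin 2) ℂ :=
  Matrix.det
    !![X 0 + MvPolynomial.C (s / 5) * X 1,
        MvPolynomial.C (s / 5) * X 0 + MvPolynomial.C (t / 10) * X 1,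
        MvPolynomial.C (t / 10) * X 0;
      MvPolynomial.C (s / 5) * X 0 + MvPolynomial.C (t / 10) * X 1,
        MvPolynomial.C (t / 10) * X 0, 0;
      MvPolynomial.C (t / 10) * X 0, 0, X 1]

/-- For any factorization of the canonizant of `f_{s,t}` into linear factors
`∏_{ν=1}^{3} (bν z1 − cν z2)`, one has
`∏_{α<β} (b_α c_β − b_β c_α)^2
  = −(19200 s^6 t^2 − 160000 s^4 t^3 − 1120 s^3 t^6 + 440000 s^2 t^4 + 3600 s t^7 + 27 t^{10}
      − 400000 t^5)/10^{10}`. -/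
theorem canonizant_invariant_fst (s t : ℂ) (b c : Fin 3 → ℂ)
    (h : canFst s t = ∏ ν : Fin 3,
        (MvPolynomial.C (b ν) * X 0 - MvPolynomial.C (c ν) * X 1 : MvPolynomial (Fin 2) ℂ)) :
    (∏ p ∈ Finset.univ.filter (fun p : Fin 3 × Fin 3 => p.1 < p.2),
      (b p.1 * c p.2 - b p.2 * c p.1) ^ 2)
      = -(19200 * s ^ 6 * t ^ 2 - 160000 * s ^ 4 * t ^ 3 - 1120 * s ^ 3 * t ^ 6
          + 440000 * s ^ 2 * t ^ 4 + 3600 * s * t ^ 7 + 27 * t ^ 10 - 400000 * t ^ 5)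
        / 10 ^ 10 := by
  have e1 := congrArg (MvPolynomial.eval ![(1:ℂ), 0]) h
  have e2 := congrArg (MvPolynomial.eval ![(0:ℂ), 1]) h
  have e3 := congrArg (MvPolynomial.eval ![(1:ℂ), 1]) h
  have e4 := congrArg (MvPolynomial.eval ![(1:ℂ), -1]) h
  simp [canFst, Matrix.det_fin_three, Fin.prod_univ_three] at e1 e2 e3 e4
  have hB : b 0 * b 1 * b 2 = -t ^ 3 / 1000 := by linear_combination -e1
  have hC : c 0 * c 1 * c 2 = t ^ 2 / 100 := by linear_combination -e2
  have hS1 : b 0 * b 1 * c 2 + b 0 * c 1 * b 2 + c 0 * b 1 * b 2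
      = s ^ 2 / 25 - t / 10 := by
    linear_combination (1/2 : ℂ) * e3 - (1/2 : ℂ) * e4 - hC
  have hS2 : b 0 * c 1 * c 2 + c 0 * b 1 * c 2 + c 0 * c 1 * b 2
      = -(s * t) / 50 := by
    linear_combination (-1/2 : ℂ) * e3 - (1/2 : ℂ) * e4 - hB
  have hset : Finset.univ.filter (fun p : Fin 3 × Fin 3 => p.1 < p.2)
      = {((0:Fin 3), (1:Fin 3)), (0, 2), (1, 2)} := by decide
  rw [hset, Finset.prod_insert (by decide), Finset.prod_insert (by decide),
    Finset.prod_singleton]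
  have key : (b 0 * c 1 - b 1 * c 0) ^ 2 *
      ((b 0 * c 2 - b 2 * c 0) ^ 2 * (b 1 * c 2 - b 2 * c 1) ^ 2)
      = 18 * (b 0 * b 1 * b 2) * (b 0 * b 1 * c 2 + b 0 * c 1 * b 2 + c 0 * b 1 * b 2)
          * (b 0 * c 1 * c 2 + c 0 * b 1 * c 2 + c 0 * c 1 * b 2) * (c 0 * c 1 * c 2)
        - 4 * (b 0 * b 1 * c 2 + b 0 * c 1 * b 2 + c 0 * b 1 * b 2) ^ 3 * (c 0 * c 1 * c 2)
        + (b 0 * b 1 * c 2 + b 0 * c 1 * b 2 + c 0 * b 1 * b 2) ^ 2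
          * (b 0 * c 1 * c 2 + c 0 * b 1 * c 2 + c 0 * c 1 * b 2) ^ 2
        - 4 * (b 0 * b 1 * b 2) * (b 0 * c 1 * c 2 + c 0 * b 1 * c 2 + c 0 * c 1 * b 2) ^ 3
        - 27 * (b 0 * b 1 * b 2) ^ 2 * (c 0 * c 1 * c 2) ^ 2 := by ring
  show (b 0 * c 1 - b 1 * c 0) ^ 2 *
      ((b 0 * c 2 - b 2 * c 0) ^ 2 * (b 1 * c 2 - b 2 * c 1) ^ 2) = _
  rw [key, hB, hS1, hS2, hC]
  ring
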